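/- Let X, Y be finite sets, x ∈ X, and Z = (X ∖ {x}) ⊔ Y. Let i : Y → Z be the natural inclusion and p : Z → X the map restricting to the natural inclusion on X ∖ {x} and sending all of Y to x. Then the map ∘_x : 𝔤(X) × 𝔤(Y) → 𝔤(Z) given by (a, b) ↦ p^*(a) + i_*(b) is a Lie algebra homomorphism from the product Lie algebra 𝔤(X) × 𝔤(Y); equivalently, [p^*(a), i_*(b)] = 0 in 𝔤(Z) for all a ∈ 𝔤(X), b ∈ 𝔤(Y). -/

import Mathlib

noncomputable section
attribute [local instance] Classical.propDecidable

/-- Generators `t_{ij}` of the Drinfeld–Kohno Lie algebra: pairs of distinct elements. -/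
def DKGen (T : Type) : Type := {p : T × T // p.1 ≠ p.2}

variable (k : Type) [Field k] [CharZero k]

/-- The relations: `t_{ij} = t_{ji}`, `[t_{ij}, t_{kl}] = 0` for `i,j,k,l` pairwise distinct,
and `[t_{ij}, t_{ik} + t_{jk}] = 0` for `i,j,k` pairwise distinct. -/
def DKRel (T : Type) : Set (FreeLieAlgebra k (DKGen T)) :=
  {x | (∃ (i j : T) (h : i ≠ j),
          x = FreeLieAlgebra.of k (⟨(i, j), h⟩ : DKGen T)
              - FreeLieAlgebra.of k (⟨(j, i), h.symm⟩ : DKGen T))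
     ∨ (∃ (i j l m : T) (hij : i ≠ j) (hlm : l ≠ m),
          i ≠ l ∧ i ≠ m ∧ j ≠ l ∧ j ≠ m ∧
          x = ⁅FreeLieAlgebra.of k (⟨(i, j), hij⟩ : DKGen T),
               FreeLieAlgebra.of k (⟨(l, m), hlm⟩ : DKGen T)⁆)
     ∨ (∃ (i j l : T) (hij : i ≠ j) (hil : i ≠ l) (hjl : j ≠ l),
          x = ⁅FreeLieAlgebra.of k (⟨(i, j), hij⟩ : DKGen T),
               FreeLieAlgebra.of k (⟨(i, l), hil⟩ : DKGen T)
               + FreeLieAlgebra.of k (⟨(j, l), hjl⟩ : DKGen T)⁆)}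

/-- The Lie ideal generated by the relations. -/
def DKIdeal (T : Type) : LieIdeal k (FreeLieAlgebra k (DKGen T)) :=
  LieSubmodule.lieSpan k _ (DKRel k T)

/-- The Drinfeld–Kohno Lie algebra `𝔤(T)`. -/
abbrev DK (T : Type) := FreeLieAlgebra k (DKGen T) ⧸ DKIdeal k T

/-- The generator `t_{ij} ∈ 𝔤(T)` (defined to be `0` when `i = j`). -/
def DKt (T : Type) (i j : T) : DK k T :=
  if h : i = j then 0
  else LieSubmodule.Quotient.mk (N := DKIdeal k T) (FreeLieAlgebra.of k (⟨(i, j), h⟩ : DKGen T))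

/-- `F` is the direct image homomorphism `f_* : 𝔤(S) → 𝔤(T)` along `f : S → T`,
i.e. `F (t_{ij}) = t_{f(i) f(j)}` for all distinct `i, j`. -/
def IsDirectImage {S T : Type} (f : S → T) (F : DK k S →ₗ⁅k⁆ DK k T) : Prop :=
  ∀ i j : S, i ≠ j → F (DKt k S i j) = DKt k T (f i) (f j)

/-- `G` is the inverse image homomorphism `f^* : 𝔤(T) → 𝔤(S)` along `f : S → T`, i.e.
`G (t_{ij}) = ∑_{f(p) = i, f(q) = j} t_{pq}` for all distinct `i, j`. -/
def IsInverseImage {S T : Type} [Fintype S] (f : S → T) (G : DK k T →ₗ⁅k⁆ DK k S) : Prop :=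
  ∀ i j : T, i ≠ j →
    G (DKt k T i j) =
      ∑ p ∈ Finset.univ.filter (fun p => f p = i),
        ∑ q ∈ Finset.univ.filter (fun q => f q = j), DKt k S p q



section Aux

/-- The quotient map as a Lie algebra homomorphism. -/
def DKmk (T : Type) : FreeLieAlgebra k (DKGen T) →ₗ⁅k⁆ DK k T where
  toFun := LieSubmodule.Quotient.mk (N := DKIdeal k T)
  map_add' := fun _ _ => rfl
  map_smul' := fun _ _ => rfl
  map_lie' := fun {_ _} => rfl

lemma DKmk_surjective (T : Type) : Function.Surjective (DKmk k T) :=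
  Quot.mk_surjective

lemma DKt_eq (T : Type) {i j : T} (h : i ≠ j) :
    DKt k T i j = DKmk k T (FreeLieAlgebra.of k (⟨(i, j), h⟩ : DKGen T)) := by
  simp [DKt, dif_neg h]; rfl

lemma DKmk_rel_zero (T : Type) {y : FreeLieAlgebra k (DKGen T)} (hy : y ∈ DKRel k T) :
    DKmk k T y = 0 := by
  have : y ∈ DKIdeal k T := LieSubmodule.subset_lieSpan hy
  exact (LieSubmodule.Quotient.mk_eq_zero' (N := DKIdeal k T)).mpr this

lemma DKt_symm (T : Type) (i j : T) : DKt k T i j = DKt k T j i := by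
  by_cases h : i = j
  · subst h; rfl
  · rw [DKt_eq k T h, DKt_eq k T (Ne.symm h), ← sub_eq_zero, ← map_sub]
    exact DKmk_rel_zero k T (Or.inl ⟨i, j, h, rfl⟩)

lemma DKt_lie4 (T : Type) {i j l m : T} (hij : i ≠ j) (hlm : l ≠ m)
    (hil : i ≠ l) (him : i ≠ m) (hjl : j ≠ l) (hjm : j ≠ m) :
    ⁅DKt k T i j, DKt k T l m⁆ = 0 := by
  rw [DKt_eq k T hij, DKt_eq k T hlm, ← LieHom.map_lie]
  exact DKmk_rel_zero k T (Or.inr (Or.inl ⟨i, j, l, m, hij, hlm, hil, him, hjl, hjm, rfl⟩))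

lemma DKt_lie3 (T : Type) {i j l : T} (hij : i ≠ j) (hil : i ≠ l) (hjl : j ≠ l) :
    ⁅DKt k T i j, DKt k T i l + DKt k T j l⁆ = 0 := by
  rw [DKt_eq k T hij, DKt_eq k T hil, DKt_eq k T hjl, ← map_add _ _ _, ← LieHom.map_lie]
  exact DKmk_rel_zero k T (Or.inr (Or.inr ⟨i, j, l, hij, hil, hjl, rfl⟩))

/-- Induction principle for `DK`. -/
lemma DK.induction {T : Type} {motive : DK k T → Prop}
    (hgen : ∀ (i j : T) (h : i ≠ j), motive (DKt k T i j))
    (hzero : motive 0)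
    (hadd : ∀ a b, motive a → motive b → motive (a + b))
    (hsmul : ∀ (c : k) a, motive a → motive (c • a))
    (hlie : ∀ a b, motive a → motive b → motive ⁅a, b⁆) :
    ∀ a, motive a := by
  let K : LieSubalgebra k (DK k T) :=
    { carrier := {a | motive a}
      add_mem' := fun ha hb => hadd _ _ ha hb
      zero_mem' := hzero
      smul_mem' := fun c a ha => hsmul c a ha
      lie_mem' := fun {a b} ha hb => hlie a b ha hb }
  have hK : Set.range (fun g : DKGen T => DKmk k T (FreeLieAlgebra.of k g)) ⊆ K := by
    rintro - ⟨g, rfl⟩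
    have := hgen g.1.1 g.1.2 g.2
    rwa [DKt_eq k T g.2] at this
  have htop : LieSubalgebra.lieSpan k (DK k T)
      (Set.range (fun g : DKGen T => DKmk k T (FreeLieAlgebra.of k g))) = ⊤ := by
    rw [eq_top_iff]
    rintro a -
    obtain ⟨y, rfl⟩ := DKmk_surjective k T a
    let L := LieSubalgebra.lieSpan k (DK k T)
      (Set.range (fun g : DKGen T => DKmk k T (FreeLieAlgebra.of k g)))
    let φ : FreeLieAlgebra k (DKGen T) →ₗ⁅k⁆ L :=
      FreeLieAlgebra.lift k (fun g =>
        (⟨DKmk k T (FreeLieAlgebra.of k g), LieSubalgebra.subset_lieSpan ⟨g, rfl⟩⟩ : L))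
    have : L.incl.comp φ = DKmk k T := by
      apply FreeLieAlgebra.hom_ext
      intro g
      simp [φ, FreeLieAlgebra.lift_of_apply]
    have := LieHom.congr_fun this y
    rw [← this]
    exact (φ y).2
  intro a
  have : a ∈ K := by
    have := (LieSubalgebra.lieSpan_le (K := K)).mpr hK
    rw [htop] at this
    exact this trivial
  exact this

lemma lie_sum' {L : Type} [LieRing L] [LieAlgebra k L] {ι : Type} (s : Finset ι)
    (f : ι → L) (c : L) : ⁅∑ i ∈ s, f i, c⁆ = ∑ i ∈ s, ⁅f i, c⁆ := by
  classical
  induction s using Finset.induction_on with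
  | empty => simp
  | @insert _ _ h ih => rw [Finset.sum_insert h, Finset.sum_insert h, add_lie, ih]

end Aux

/-- The set `Z = (X ∖ {x}) ⊔ Y` obtained by inserting `Y` at the position `x ∈ X`. -/
abbrev Ins (X : Type) (x : X) (Y : Type) : Type := {a : X // a ≠ x} ⊕ Y

/-- The natural inclusion `i : Y → Z`. -/
abbrev insI (X : Type) (x : X) (Y : Type) : Y → Ins X x Y := Sum.inr

/-- The projection `p : Z → X`, restricting to the inclusion on `X ∖ {x}` and sending all
of `Y` to `x`. -/
abbrev insP (X : Type) (x : X) (Y : Type) : Ins X x Y → X :=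
  Sum.elim Subtype.val (fun _ => x)

/-- with `Z = (X ∖ {x}) ⊔ Y`, `i : Y → Z` the inclusion and `p : Z → X` as
above, the map `(a, b) ↦ p^*(a) + i_*(b)` is a Lie algebra homomorphism
`𝔤(X) × 𝔤(Y) → 𝔤(Z)`; equivalently, `[p^*(a), i_*(b)] = 0` for all `a, b`. -/
theorem insertion_isLieHom (X Y : Type) [Fintype X] [Fintype Y] (x : X)
    (P : DK k X →ₗ⁅k⁆ DK k (Ins X x Y)) (hP : IsInverseImage k (insP X x Y) P)
    (I : DK k Y →ₗ⁅k⁆ DK k (Ins X x Y)) (hI : IsDirectImage k (insI X x Y) I) :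
    ∀ (a : DK k X) (b : DK k Y), ⁅P a, I b⁆ = 0 := by
  classical
  have hfilt : ∀ (i : X) (hi : i ≠ x),
      Finset.univ.filter (fun p : Ins X x Y => insP X x Y p = i)
        = {Sum.inl ⟨i, hi⟩} := by
    intro i hi
    ext p
    cases p with
    | inl a =>
      simp only [Finset.mem_filter, Finset.mem_univ, true_and, Finset.mem_singleton,
        insP, Sum.elim_inl]
      constructor
      · intro h; exact congrArg Sum.inl (Subtype.ext h)
      · intro h; cases h; rfl
    | inr y =>
      simp only [Finset.mem_filter, Finset.mem_univ, true_and, Finset.mem_singleton,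
        insP, Sum.elim_inr]
      constructor
      · intro h; exact absurd h.symm hi
      · intro h; exact absurd h (by simp)
  have hfiltx : Finset.univ.filter (fun p : Ins X x Y => insP X x Y p = x)
      = Finset.univ.image (Sum.inr : Y → Ins X x Y) := by
    ext p
    cases p with
    | inl a => simp [insP, a.2]
    | inr y => simp [insP]
  have base : ∀ (i j : X), i ≠ j → ∀ (l m : Y), l ≠ m →
      ⁅P (DKt k X i j), I (DKt k Y l m)⁆ = 0 := by
    intro i j hij l m hlm
    rw [hP i j hij, hI l m hlm]
    set T := DKt k (Ins X x Y) (Sum.inr l : Ins X x Y) (Sum.inr m) with hT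
    have hlm' : (Sum.inr l : Ins X x Y) ≠ Sum.inr m := fun h => hlm (Sum.inr_injective h)
    by_cases hix : i = x
    · subst hix
      have hjx : j ≠ i := hij.symm
      rw [hfiltx, hfilt j hjx, Finset.sum_image (fun a _ b _ h => Sum.inr_injective h)]
      simp only [Finset.sum_singleton]
      rw [lie_sum' k]
      have hvan : ∀ y ∈ Finset.univ, y ∉ ({l, m} : Finset Y) →
          ⁅DKt k (Ins X i Y) (Sum.inr y) (Sum.inl ⟨j, hjx⟩), T⁆ = 0 := by
        intro y _ hy
        simp only [Finset.mem_insert, Finset.mem_singleton, not_or] at hy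
        exact DKt_lie4 k _ (Sum.inr_ne_inl) hlm'
          (fun h => hy.1 (Sum.inr_injective h)) (fun h => hy.2 (Sum.inr_injective h))
          Sum.inl_ne_inr Sum.inl_ne_inr
      rw [← Finset.sum_subset (Finset.subset_univ ({l, m} : Finset Y)) hvan,
        Finset.sum_pair hlm, ← add_lie]
      rw [← neg_eq_zero, ← lie_skew, neg_neg, hT]
      exact DKt_lie3 k _ hlm' Sum.inr_ne_inl Sum.inr_ne_inl
    · by_cases hjx : j = x
      · subst hjx
        rw [hfiltx, hfilt i hix]
        simp only [Finset.sum_singleton]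
        rw [Finset.sum_image (fun a _ b _ h => Sum.inr_injective h)]
        have hflip : ∀ y : Y, DKt k (Ins X j Y) (Sum.inl ⟨i, hix⟩) (Sum.inr y)
            = DKt k (Ins X j Y) (Sum.inr y) (Sum.inl ⟨i, hix⟩) := fun y => DKt_symm k _ _ _
        simp only [hflip]
        rw [lie_sum' k]
        have hvan : ∀ y ∈ Finset.univ, y ∉ ({l, m} : Finset Y) →
            ⁅DKt k (Ins X j Y) (Sum.inr y) (Sum.inl ⟨i, hix⟩), T⁆ = 0 := by
          intro y _ hy
          simp only [Finset.mem_insert, Finset.mem_singleton, not_or] at hy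
          exact DKt_lie4 k _ (Sum.inr_ne_inl) hlm'
            (fun h => hy.1 (Sum.inr_injective h)) (fun h => hy.2 (Sum.inr_injective h))
            Sum.inl_ne_inr Sum.inl_ne_inr
        rw [← Finset.sum_subset (Finset.subset_univ ({l, m} : Finset Y)) hvan,
          Finset.sum_pair hlm, ← add_lie]
        rw [← neg_eq_zero, ← lie_skew, neg_neg, hT]
        exact DKt_lie3 k _ hlm' Sum.inr_ne_inl Sum.inr_ne_inl
      · rw [hfilt i hix, hfilt j hjx]
        simp only [Finset.sum_singleton]
        refine DKt_lie4 k _ (fun h => hij (by injection h with h; exact congrArg Subtype.val h))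
          hlm' Sum.inl_ne_inr Sum.inl_ne_inr Sum.inl_ne_inr Sum.inl_ne_inr
  intro a b
  refine DK.induction k (motive := fun b => ∀ a : DK k X, ⁅P a, I b⁆ = 0)
    ?_ ?_ ?_ ?_ ?_ b a
  · intro l m hlm
    refine DK.induction k (motive := fun a : DK k X => ⁅P a, I (DKt k Y l m)⁆ = 0)
      ?_ ?_ ?_ ?_ ?_
    · intro i j hij; exact base i j hij l m hlm
    · simp
    · intro a b ha hb; rw [map_add _ _ _, add_lie, ha, hb, add_zero]
    · intro c a ha; rw [map_smul _ _ _, smul_lie, ha, smul_zero]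
    · intro a b ha hb
      rw [LieHom.map_lie, lie_lie, ha, hb, lie_zero, lie_zero, sub_zero]
  · intro a; simp
  · intro b b' hb hb' a; rw [map_add _ _ _, lie_add, hb, hb', add_zero]
  · intro c b hb a; rw [map_smul _ _ _, lie_smul, hb, smul_zero]
  · intro b b' hb hb' a
    rw [LieHom.map_lie, leibniz_lie, hb, hb', zero_lie, lie_zero, add_zero]
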